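/- arXiv:1908.09666 — 3 statements merged into one kernel-verified Lean document; each statement's English description precedes it below -/
import Mathlib

section
/- Let K be a d×d matrix with entries in a commutative ring A, and define the star product of smooth functions f, g on ℝ^d (with a formal parameter ℏ) by f ⋆_K g = Σ_{n≥0} (ℏ^n/n!) Σ_{i₁,…,iₙ,j₁,…,jₙ} K_{i₁j₁}⋯K_{iₙjₙ} ∂_{i₁}⋯∂_{iₙ}f · ∂_{j₁}⋯∂_{jₙ}g, as a formal power series in ℏ. Then this star product is associative: (f ⋆_K g) ⋆_K h = f ⋆_K (g ⋆_K h). -/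
/-!
Put `f, g, h` into three separate slots of variables, as `F, G, H`, and let
`D_ab = ℏ Σ K_ij ∂_(a,i) ∂_(b,j)` pair slot `a` with slot `b`. Identifying two slots turns a
derivative in the merged slot into the sum of the derivatives in the two slots (chain rule), so
`(f ⋆ g) ⋆ h = Δ exp(D₀₂ + D₁₂) exp(D₀₁) (F G H)` and
`f ⋆ (g ⋆ h) = Δ exp(D₀₁ + D₀₂) exp(D₁₂) (F G H)`, where `Δ` identifies all slots.
The `D_ab` commute and lower the total degree, so on polynomials of bounded degree they are
nilpotent and `exp A ∘ exp B = exp (A + B)`; both sides are `Δ exp(D₀₁ + D₀₂ + D₁₂) (F G H)`.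
-/

open MvPolynomial

noncomputable section

variable {R : Type} [CommRing R] [Algebra ℚ R]

/-- embedding of `f(x)` into the slot `k` of a two-slot polynomial algebra
(slot `0` = the `x`-variables, slot `1` = the `y`-variables). -/
def emb {d : ℕ} (k : Fin 2) (f : MvPolynomial (Fin d) R) :
    MvPolynomial (Fin 2 × Fin d) R :=
  rename (fun i => (k, i)) f

/-- the bi-differential operator `𝒦 = Σ_{ij} K_{ij} ∂_{x_i} ⊗ ∂_{y_j}`. -/
def biOp {d : ℕ} (K : Fin d → Fin d → R) :
    Module.End R (MvPolynomial (Fin 2 × Fin d) R) :=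
  ∑ i : Fin d, ∑ j : Fin d,
    K i j • ((pderiv ((0 : Fin 2), i)).toLinearMap ∘ₗ (pderiv ((1 : Fin 2), j)).toLinearMap)

/-- the star product `f ⋆_K g = Σ_{n≥0} (ℏ^n/n!) Σ K_{i₁j₁}⋯K_{iₙjₙ}
∂_{i₁}⋯∂_{iₙ} f ⋅ ∂_{j₁}⋯∂_{jₙ} g`, i.e. `exp{ℏ𝒦}(f ⊗ g)` followed by
identifying `y = x` (the map `rename Prod.snd`). -/
def starK {d : ℕ} (ℏ : R) (K : Fin d → Fin d → R)
    (f g : MvPolynomial (Fin d) R) : MvPolynomial (Fin d) R :=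
  rename Prod.snd
    (finsum fun n : ℕ =>
      (n.factorial : ℚ)⁻¹ • (ℏ ^ n • ((biOp K ^ n) (emb 0 f * emb 1 g))))

end

open Finset

section ExpOp

variable {R M M' : Type*} [CommRing R] [AddCommGroup M] [Module R M] [Module ℚ M]
  [AddCommGroup M'] [Module R M'] [Module ℚ M']

-- `∑ᶠ` gives the junk value `0` unless the series terminates at `x`.
noncomputable def expOp (T : Module.End R M) (x : M) : M :=
  ∑ᶠ n : ℕ, (n.factorial : ℚ)⁻¹ • (T ^ n) x

lemma expOp_eq_sum {T : Module.End R M} {x : M} {N : ℕ} (h : (T ^ N) x = 0) :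
    expOp T x = ∑ n ∈ range N, (n.factorial : ℚ)⁻¹ • (T ^ n) x := by
  refine finsum_eq_sum_of_support_subset _ fun n hn => ?_
  by_contra hnN
  simp only [coe_range, Set.mem_Iio, not_lt] at hnN
  exact hn (by simp only [Module.End.pow_map_zero_of_le hnN h, smul_zero])

lemma map_expOp (L : M →ₗ[R] M') {A : Module.End R M} {B : Module.End R M'}
    (hAB : L ∘ₗ A = B ∘ₗ L) {x : M} {N : ℕ} (h : (A ^ N) x = 0) :
    L (expOp A x) = expOp B (L x) := by
  have hpow (n : ℕ) : L ((A ^ n) x) = (B ^ n) (L x) :=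
    (LinearMap.congr_fun (Module.End.commute_pow_left_of_commute hAB.symm n) x).symm
  rw [expOp_eq_sum h, expOp_eq_sum (N := N) (by rw [← hpow, h, map_zero]), map_sum]
  simp only [map_rat_smul, hpow]

variable [Algebra ℚ R] [IsScalarTower ℚ R M]

lemma expOp_eq_exp_restrict {T : Module.End R M} {S : Submodule R M} (hT : ∀ x ∈ S, T x ∈ S)
    (hnil : IsNilpotent (T.restrict hT)) (x : S) :
    expOp T x = (IsNilpotent.exp (T.restrict hT) x : M) := by
  obtain ⟨N, hN⟩ := hnil
  have hpow (n : ℕ) : (((T.restrict hT) ^ n) x : M) = (T ^ n) x := by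
    rw [Module.End.pow_restrict, LinearMap.coe_restrict_apply]
  rw [expOp_eq_sum (N := N) (by rw [← hpow, hN]; rfl), IsNilpotent.exp_eq_sum hN]
  simp [hpow]

lemma expOp_expOp {A B : Module.End R M} (hAB : Commute A B) {S : Submodule R M}
    (hA : ∀ x ∈ S, A x ∈ S) (hB : ∀ x ∈ S, B x ∈ S) (hAn : IsNilpotent (A.restrict hA))
    (hBn : IsNilpotent (B.restrict hB)) (x : S) :
    expOp A (expOp B x) = expOp (A + B) x := by
  have hAB' : ∀ y ∈ S, (A + B) y ∈ S := fun y hy => S.add_mem (hA y hy) (hB y hy)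
  have hrestrict : (A + B).restrict hAB' = A.restrict hA + B.restrict hB := rfl
  have hcomm := LinearMap.restrict_commute hAB hA hB
  have hABn : IsNilpotent ((A + B).restrict hAB') := hrestrict ▸ hcomm.isNilpotent_add hAn hBn
  rw [expOp_eq_exp_restrict hB hBn x, expOp_eq_exp_restrict hA hAn,
    expOp_eq_exp_restrict hAB' hABn, hrestrict, IsNilpotent.exp_add_of_commute hcomm hAn hBn]
  rfl

end ExpOp

namespace MvPolynomial

section TotalDegreeLT

variable {σ R : Type*} [CommRing R]

variable (σ R) in
noncomputable def totalDegreeLT (n : ℕ) : Submodule R (MvPolynomial σ R) :=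
  restrictSupport R {m | m.degree < n}

lemma mem_totalDegreeLT {n : ℕ} {p : MvPolynomial σ R} :
    p ∈ totalDegreeLT σ R n ↔ ∀ m ∈ p.support, m.degree < n :=
  Iff.rfl

lemma eq_zero_of_mem_totalDegreeLT_zero {p : MvPolynomial σ R} (hp : p ∈ totalDegreeLT σ R 0) :
    p = 0 := by
  rw [← support_eq_empty, Finset.eq_empty_iff_forall_notMem]
  exact fun m hm => Nat.not_lt_zero _ (mem_totalDegreeLT.mp hp m hm)

lemma mem_totalDegreeLT_totalDegree_add_one (p : MvPolynomial σ R) :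
    p ∈ totalDegreeLT σ R (p.totalDegree + 1) :=
  mem_totalDegreeLT.mpr fun _ hm => Nat.lt_succ_of_le (le_totalDegree hm)

lemma totalDegreeLT_mono {m n : ℕ} (h : m ≤ n) : totalDegreeLT σ R m ≤ totalDegreeLT σ R n :=
  restrictSupport_mono R fun _ hx => lt_of_lt_of_le hx h

lemma pderiv_mem_totalDegreeLT (i : σ) {n : ℕ} {p : MvPolynomial σ R}
    (hp : p ∈ totalDegreeLT σ R (n + 1)) : pderiv i p ∈ totalDegreeLT σ R n := by
  refine mem_totalDegreeLT.mpr fun m hm => ?_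
  rw [mem_support_iff, coeff_pderiv] at hm
  have hdeg : (m + Finsupp.single i 1).degree < n + 1 :=
    mem_totalDegreeLT.mp hp _ (mem_support_iff.mpr (left_ne_zero_of_mul hm))
  rw [map_add, Finsupp.degree_single] at hdeg
  exact Nat.lt_of_add_lt_add_right hdeg

lemma commute_pderiv (i j : σ) :
    Commute ((pderiv i).toLinearMap : Module.End R (MvPolynomial σ R)) (pderiv j).toLinearMap := by
  have hbracket : ⁅pderiv (R := R) i, pderiv (R := R) j⁆ = 0 := by
    classical
    refine derivation_ext fun k => ?_
    rw [Derivation.commutator_apply, pderiv_X, pderiv_X]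
    simp [Pi.single_apply, apply_ite]
  exact LinearMap.ext fun p => sub_eq_zero.mp (congrArg (· p) hbracket)

def LowersTotalDegree (T : Module.End R (MvPolynomial σ R)) : Prop :=
  ∀ n, ∀ p ∈ totalDegreeLT σ R (n + 1), T p ∈ totalDegreeLT σ R n

namespace LowersTotalDegree

variable {A B T : Module.End R (MvPolynomial σ R)}

lemma mapsTo (hT : LowersTotalDegree T) (n : ℕ) :
    ∀ p ∈ totalDegreeLT σ R n, T p ∈ totalDegreeLT σ R n := by
  intro p hp
  cases n with
  | zero => rw [eq_zero_of_mem_totalDegreeLT_zero hp, map_zero]; exact zero_mem _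
  | succ n => exact totalDegreeLT_mono n.le_succ (hT n p hp)

lemma pow_apply_eq_zero (hT : LowersTotalDegree T) {n : ℕ} {p : MvPolynomial σ R}
    (hp : p ∈ totalDegreeLT σ R n) : (T ^ n) p = 0 := by
  induction n generalizing p with
  | zero => exact eq_zero_of_mem_totalDegreeLT_zero hp
  | succ n ih => rw [pow_succ, Module.End.mul_apply]; exact ih (hT n p hp)

lemma isNilpotent_restrict (hT : LowersTotalDegree T) (n : ℕ) :
    IsNilpotent (T.restrict (hT.mapsTo n)) :=
  ⟨n, LinearMap.ext fun p => Subtype.ext <| by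
    rw [Module.End.pow_restrict, LinearMap.coe_restrict_apply, hT.pow_apply_eq_zero p.2]; rfl⟩

lemma add (hA : LowersTotalDegree A) (hB : LowersTotalDegree B) : LowersTotalDegree (A + B) :=
  fun n p hp => add_mem (hA n p hp) (hB n p hp)

lemma smul (c : R) (hT : LowersTotalDegree T) : LowersTotalDegree (c • T) :=
  fun n p hp => Submodule.smul_mem _ c (hT n p hp)

lemma mul (hA : LowersTotalDegree A) (hB : LowersTotalDegree B) : LowersTotalDegree (A * B) :=
  fun n p hp => hA.mapsTo n _ (hB n p hp)

lemma sum {ι : Type*} (s : Finset ι) {T : ι → Module.End R (MvPolynomial σ R)}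
    (hT : ∀ i ∈ s, LowersTotalDegree (T i)) : LowersTotalDegree (∑ i ∈ s, T i) := by
  intro n p hp
  rw [LinearMap.sum_apply]
  exact sum_mem fun i hi => hT i hi n p hp

variable [Algebra ℚ R]

lemma expOp_expOp (hA : LowersTotalDegree A) (hB : LowersTotalDegree B) (hAB : Commute A B)
    (p : MvPolynomial σ R) : expOp A (expOp B p) = expOp (A + B) p :=
  _root_.expOp_expOp hAB (hA.mapsTo _) (hB.mapsTo _) (hA.isNilpotent_restrict _)
    (hB.isNilpotent_restrict _) ⟨p, mem_totalDegreeLT_totalDegree_add_one p⟩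

lemma map_expOp {τ : Type*} (L : MvPolynomial σ R →ₗ[R] MvPolynomial τ R)
    {B : Module.End R (MvPolynomial τ R)} (hA : LowersTotalDegree A) (hAB : L ∘ₗ A = B ∘ₗ L)
    (p : MvPolynomial σ R) : L (expOp A p) = expOp B (L p) :=
  _root_.map_expOp L hAB (hA.pow_apply_eq_zero (mem_totalDegreeLT_totalDegree_add_one p))

lemma rename_expOp {τ : Type*} (f : σ → τ) {B : Module.End R (MvPolynomial τ R)}
    (hA : LowersTotalDegree A)
    (hAB : (rename f).toLinearMap ∘ₗ A = B ∘ₗ (rename f).toLinearMap) (p : MvPolynomial σ R) :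
    rename f (expOp A p) = expOp B (rename f p) :=
  hA.map_expOp _ hAB p

lemma expOp_mul (hA : LowersTotalDegree A) {r : MvPolynomial σ R}
    (hAr : ∀ q, A (q * r) = A q * r) (p : MvPolynomial σ R) :
    expOp A p * r = expOp A (p * r) :=
  hA.map_expOp (LinearMap.mulRight R r) (LinearMap.ext fun q => (hAr q).symm) p

end LowersTotalDegree

lemma lowersTotalDegree_pderiv (i : σ) :
    LowersTotalDegree ((pderiv i).toLinearMap : Module.End R (MvPolynomial σ R)) :=
  fun _ _ hp => pderiv_mem_totalDegreeLT i hp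

end TotalDegreeLT

section SlotBiOp

variable {R ι ι' κ : Type*} [CommRing R]

lemma pderiv_rename_prodMk_of_ne {a c : ι} (hac : a ≠ c) (i : κ) (f : MvPolynomial κ R) :
    pderiv (a, i) (rename (Prod.mk c) f) = 0 := by
  classical
  refine pderiv_eq_zero_of_notMem_vars fun hmem => ?_
  obtain ⟨j, -, hj⟩ := Finset.mem_image.mp (vars_rename _ f hmem)
  exact hac (Prod.ext_iff.mp hj).1.symm

lemma pderiv_rename_prodMap [Fintype ι] [DecidableEq ι'] (t : ι → ι') (k : ι') (i : κ)
    (q : MvPolynomial (ι × κ) R) :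
    pderiv (k, i) (rename (Prod.map t id) q) =
      ∑ a with t a = k, rename (Prod.map t id) (pderiv (a, i) q) := by
  classical
  induction q using MvPolynomial.induction_on with
  | C r => simp
  | add p q hp hq => simp [hp, hq, sum_add_distrib]
  | mul_X p v hp =>
    simp [hp, sum_add_distrib, mul_sum, pderiv_X, Pi.single_apply, Prod.ext_iff, apply_ite,
      ite_and]

variable [Fintype κ]

noncomputable def slotBiOp (K : κ → κ → R) (a b : ι) : Module.End R (MvPolynomial (ι × κ) R) :=
  ∑ i, ∑ j, K i j • ((pderiv (a, i)).toLinearMap ∘ₗ (pderiv (b, j)).toLinearMap)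

lemma slotBiOp_apply (K : κ → κ → R) (a b : ι) (q : MvPolynomial (ι × κ) R) :
    slotBiOp K a b q = ∑ i, ∑ j, K i j • pderiv (a, i) (pderiv (b, j) q) := by
  simp [slotBiOp, LinearMap.sum_apply]

lemma lowersTotalDegree_slotBiOp (K : κ → κ → R) (a b : ι) :
    LowersTotalDegree (slotBiOp K a b) :=
  .sum _ fun _ _ => .sum _ fun _ _ =>
    ((lowersTotalDegree_pderiv _).mul (lowersTotalDegree_pderiv _)).smul _

lemma commute_slotBiOp (K : κ → κ → R) (a b a' b' : ι) :
    Commute (slotBiOp K a b) (slotBiOp K a' b') := by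
  refine .sum_left _ _ _ fun i _ => .sum_left _ _ _ fun j _ => ?_
  refine .sum_right _ _ _ fun i' _ => .sum_right _ _ _ fun j' _ => ?_
  refine .smul_left (.smul_right ?_ _) _
  exact ((commute_pderiv _ _).mul_right (commute_pderiv _ _)).mul_left
    ((commute_pderiv _ _).mul_right (commute_pderiv _ _))

lemma slotBiOp_mul_rename_of_ne (K : κ → κ → R) {a b c : ι} (hca : c ≠ a) (hcb : c ≠ b)
    (f : MvPolynomial κ R) (q : MvPolynomial (ι × κ) R) :
    slotBiOp K a b (q * rename (Prod.mk c) f) = slotBiOp K a b q * rename (Prod.mk c) f := by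
  simp only [slotBiOp_apply, pderiv_mul, pderiv_rename_prodMk_of_ne hca.symm,
    pderiv_rename_prodMk_of_ne hcb.symm, mul_zero, add_zero, sum_mul, smul_mul_assoc]

lemma slotBiOp_comp_rename [Fintype ι] [DecidableEq ι'] (K : κ → κ → R) (t : ι → ι')
    (k l : ι') :
    slotBiOp K k l ∘ₗ (rename (Prod.map t id)).toLinearMap =
      (rename (Prod.map t id)).toLinearMap ∘ₗ
        ∑ a with t a = k, ∑ b with t b = l, slotBiOp K a b := by
  refine LinearMap.ext fun q => ?_
  simp only [LinearMap.comp_apply, slotBiOp_apply, LinearMap.sum_apply, AlgHom.toLinearMap_apply,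
    pderiv_rename_prodMap, map_sum, map_smul, smul_sum]
  simp_rw [sum_comm (s := {a | t a = k})]
  simp_rw [sum_comm (s := {b | t b = l})]

end SlotBiOp

end MvPolynomial

section StarProduct

open MvPolynomial

variable {R : Type} {ι : Type*} [CommRing R] {d : ℕ}

lemma rename_prodMap_emb (t : Fin 2 → ι) (k : Fin 2) (f : MvPolynomial (Fin d) R) :
    rename (Prod.map t id) (emb k f) = rename (Prod.mk (t k)) f := by
  rw [emb, rename_rename]
  rfl

variable [Algebra ℚ R]

lemma starK_eq_expOp (ℏ : R) (K : Fin d → Fin d → R) (f g : MvPolynomial (Fin d) R) :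
    starK ℏ K f g = rename Prod.snd (expOp (ℏ • slotBiOp K 0 1) (emb 0 f * emb 1 g)) := by
  simp only [starK, biOp, expOp, smul_pow, LinearMap.smul_apply]
  rfl

lemma emb_starK [Fintype ι] [DecidableEq ι] (ℏ : R) (K : Fin d → Fin d → R)
    {t : Fin 2 → ι} (ht : Function.Injective t) (m : ι → Fin 2) {k : Fin 2}
    (hmt : ∀ a, m (t a) = k) (f g : MvPolynomial (Fin d) R) :
    emb k (starK ℏ K f g) = rename (Prod.map m id) (expOp (ℏ • slotBiOp K (t 0) (t 1))
      (rename (Prod.mk (t 0)) f * rename (Prod.mk (t 1)) g)) := by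
  have hsplit (p : MvPolynomial (Fin 2 × Fin d) R) :
      emb k (rename Prod.snd p) = rename (Prod.map m id) (rename (Prod.map t id) p) := by
    simp only [emb, rename_rename]
    exact congrArg (rename · p) (funext fun v => Prod.ext (hmt v.1).symm rfl)
  have hintertwine : (rename (Prod.map t id)).toLinearMap ∘ₗ (ℏ • slotBiOp K 0 1) =
      (ℏ • slotBiOp K (t 0) (t 1)) ∘ₗ (rename (Prod.map t id)).toLinearMap := by
    rw [LinearMap.comp_smul, LinearMap.smul_comp, slotBiOp_comp_rename]
    simp [ht.eq_iff, Finset.filter_eq']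
  rw [starK_eq_expOp, hsplit,
    ((lowersTotalDegree_slotBiOp K 0 1).smul ℏ).rename_expOp _ hintertwine, map_mul,
    rename_prodMap_emb, rename_prodMap_emb]

lemma rename_snd_expOp_rename [Fintype ι] [DecidableEq ι] (ℏ : R) (K : Fin d → Fin d → R)
    (m : ι → Fin 2) (p : MvPolynomial (ι × Fin d) R) :
    rename Prod.snd (expOp (ℏ • slotBiOp K 0 1) (rename (Prod.map m id) p)) =
      rename Prod.snd (expOp (ℏ • ∑ a with m a = 0, ∑ b with m b = 1, slotBiOp K a b) p) := by
  have hintertwine : (rename (Prod.map m id)).toLinearMap ∘ₗ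
      (ℏ • ∑ a with m a = 0, ∑ b with m b = 1, slotBiOp K a b) =
      (ℏ • slotBiOp K 0 1) ∘ₗ (rename (Prod.map m id)).toLinearMap := by
    rw [LinearMap.comp_smul, LinearMap.smul_comp, slotBiOp_comp_rename]
  have hlowers : LowersTotalDegree (ℏ • ∑ a with m a = 0, ∑ b with m b = 1, slotBiOp K a b) :=
    .smul ℏ <| .sum _ fun a _ => .sum _ fun b _ => lowersTotalDegree_slotBiOp K a b
  rw [← hlowers.rename_expOp _ hintertwine, rename_rename]
  rfl

end StarProduct

section Associativity

open MvPolynomial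

variable {R : Type} [CommRing R] [Algebra ℚ R]

lemma starK_starK_left {d : ℕ} (ℏ : R) (K : Fin d → Fin d → R)
    (f g h : MvPolynomial (Fin d) R) :
    starK ℏ K (starK ℏ K f g) h = rename Prod.snd
      (expOp (ℏ • slotBiOp K 0 2 + ℏ • slotBiOp K 1 2) (expOp (ℏ • slotBiOp K 0 1)
        (rename (Prod.mk 0) f * rename (Prod.mk 1) g * rename (Prod.mk (2 : Fin 3)) h))) := by
  have hh : emb 1 h = rename (Prod.map ![0, 0, 1] id) (rename (Prod.mk (2 : Fin 3)) h) := by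
    rw [rename_rename]; rfl
  rw [starK_eq_expOp, emb_starK ℏ K (Fin.castSucc_injective 2) ![0, 0, 1] (k := 0) (by decide),
    hh, ← map_mul, rename_snd_expOp_rename, Fin.castSucc_zero, Fin.castSucc_one,
    ((lowersTotalDegree_slotBiOp K 0 1).smul ℏ).expOp_mul
      (fun q => by rw [LinearMap.smul_apply, LinearMap.smul_apply, smul_mul_assoc,
        slotBiOp_mul_rename_of_ne K (by decide) (by decide)])]
  congr 2
  simp [Finset.sum_filter, Fin.sum_univ_three]

lemma starK_starK_right {d : ℕ} (ℏ : R) (K : Fin d → Fin d → R)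
    (f g h : MvPolynomial (Fin d) R) :
    starK ℏ K f (starK ℏ K g h) = rename Prod.snd
      (expOp (ℏ • slotBiOp K 0 1 + ℏ • slotBiOp K 0 2) (expOp (ℏ • slotBiOp K 1 2)
        (rename (Prod.mk 1) g * rename (Prod.mk 2) h * rename (Prod.mk (0 : Fin 3)) f))) := by
  have hf : emb 0 f = rename (Prod.map ![0, 1, 1] id) (rename (Prod.mk (0 : Fin 3)) f) := by
    rw [rename_rename]; rfl
  rw [starK_eq_expOp, emb_starK ℏ K (Fin.succ_injective 2) ![0, 1, 1] (k := 1) (by decide), hf,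
    mul_comm, ← map_mul, rename_snd_expOp_rename, Fin.succ_zero_eq_one, Fin.succ_one_eq_two,
    ((lowersTotalDegree_slotBiOp K 1 2).smul ℏ).expOp_mul
      (fun q => by rw [LinearMap.smul_apply, LinearMap.smul_apply, smul_mul_assoc,
        slotBiOp_mul_rename_of_ne K (by decide) (by decide)])]
  congr 2
  simp [Finset.sum_filter, Fin.sum_univ_three]

/-- the star product `⋆_K` is associative. -/
theorem starK_assoc {d : ℕ} (ℏ : R) (K : Fin d → Fin d → R)
    (f g h : MvPolynomial (Fin d) R) :
    starK ℏ K (starK ℏ K f g) h = starK ℏ K f (starK ℏ K g h) := by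
  have hD (a b : Fin 3) : LowersTotalDegree (ℏ • slotBiOp K a b) :=
    (lowersTotalDegree_slotBiOp K a b).smul ℏ
  have hC (a b a' b' : Fin 3) : Commute (ℏ • slotBiOp K a b) (ℏ • slotBiOp K a' b') :=
    ((commute_slotBiOp K a b a' b').smul_left ℏ).smul_right ℏ
  rw [starK_starK_left, starK_starK_right,
    ((hD 0 2).add (hD 1 2)).expOp_expOp (hD 0 1) ((hC 0 2 0 1).add_left (hC 1 2 0 1)),
    ((hD 0 1).add (hD 0 2)).expOp_expOp (hD 1 2) ((hC 0 1 1 2).add_left (hC 0 2 1 2)),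
    add_right_comm, add_comm _ (ℏ • slotBiOp K 0 1), mul_rotate]

end Associativity
end

section
/- An integer sequence (n₁,…,n_d) of positive integers is admissible — i.e. there exists a d×d symmetric nonnegative-integer matrix M with zero diagonal whose i-th row sums equal n_i for each i — if and only if n₁ + ⋯ + n_d is even and 2 n_i ≤ n₁ + ⋯ + n_d for every i. -/
lemma aux_admissible : ∀ s : ℕ, ∀ d : ℕ, ∀ n : Fin d → ℕ, ∑ i, n i = s → Even s →
    (∀ i, 2 * n i ≤ s) →
    ∃ M : Fin d → Fin d → ℕ,
      (∀ i j, M i j = M j i) ∧ (∀ i, M i i = 0) ∧ ∀ i, ∑ j, M i j = n i := by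
  intro s
  induction s using Nat.strong_induction_on with
  | _ s ih =>
    intro d n hsum heven hle
    rcases Nat.eq_zero_or_pos s with hs0 | hspos
    · subst hs0
      refine ⟨fun _ _ => 0, fun _ _ => rfl, fun _ => rfl, fun i => ?_⟩
      have : ∀ k ∈ Finset.univ, n k = 0 :=
        (Finset.sum_eq_zero_iff).1 hsum
      simp [this i (Finset.mem_univ i)]
    · -- pick i maximizing n
      have hne : (Finset.univ : Finset (Fin d)).Nonempty := by
        by_contra h
        rw [Finset.not_nonempty_iff_eq_empty] at h
        rw [h] at hsum
        simp at hsum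
        omega
      obtain ⟨i, -, hi⟩ := Finset.exists_max_image Finset.univ n hne
      have hni : 0 < n i := by
        by_contra h
        push_neg at h
        have : ∀ k ∈ Finset.univ, n k = 0 := fun k _ => by
          have := hi k (Finset.mem_univ k); omega
        rw [Finset.sum_eq_zero this] at hsum
        omega
      have herase : ∑ k ∈ Finset.univ.erase i, n k + n i = s := by
        rw [Finset.sum_erase_add _ _ (Finset.mem_univ i), hsum]
      have hepos : 0 < ∑ k ∈ Finset.univ.erase i, n k := by
        have := hle i; omega
      have hene : (Finset.univ.erase i).Nonempty := by
        by_contra h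
        rw [Finset.not_nonempty_iff_eq_empty] at h
        rw [h] at hepos
        simp at hepos
      obtain ⟨j, hjmem, hj⟩ := Finset.exists_max_image _ n hene
      have hij : j ≠ i := Finset.ne_of_mem_erase hjmem
      have hnj : 0 < n j := by
        by_contra h
        push_neg at h
        have : ∀ k ∈ Finset.univ.erase i, n k = 0 := fun k hk => by
          have := hj k hk; omega
        rw [Finset.sum_eq_zero this] at hepos
        omega
      -- new sequence
      set n' : Fin d → ℕ := fun k => if k = i then n i - 1 else if k = j then n j - 1 else n k with hn'
      have hn'i : n' i = n i - 1 := by simp [hn']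
      have hn'j : n' j = n j - 1 := by simp [hn', hij]
      have hn'k : ∀ k, k ≠ i → k ≠ j → n' k = n k := by
        intro k h1 h2; simp [hn', h1, h2]
      have key : ∀ k, n' k + ((if k = i then 1 else 0) + (if k = j then 1 else 0)) = n k := by
        intro k
        by_cases h1 : k = i
        · subst h1
          have h2 : k ≠ j := fun h => hij (h ▸ rfl)
          rw [hn'i, if_pos rfl, if_neg h2]
          omega
        · by_cases h2 : k = j
          · subst h2
            rw [hn'j, if_neg h1, if_pos rfl]
            omega
          · rw [hn'k k h1 h2, if_neg h1, if_neg h2]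
            omega
      obtain ⟨m, hm⟩ := heven
      have hs2 : 2 ≤ s := by omega
      have hsum' : ∑ k, n' k = s - 2 := by
        have h1 : ∑ k, (n' k + ((if k = i then 1 else 0) + (if k = j then 1 else 0))) = s := by
          rw [Finset.sum_congr rfl (fun k _ => key k), hsum]
        rw [Finset.sum_add_distrib, Finset.sum_add_distrib] at h1
        simp only [Finset.sum_ite_eq', Finset.mem_univ, if_true] at h1
        omega
      have heven' : Even (s - 2) := ⟨m - 1, by omega⟩
      have hle' : ∀ k, 2 * n' k ≤ s - 2 := by
        intro k
        by_cases hki : k = i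
        · subst hki
          have := hle k
          rw [hn'i]
          omega
        · by_cases hkj : k = j
          · subst hkj
            have := hle k
            rw [hn'j]
            omega
          · rw [hn'k k hki hkj]
            rcases Nat.eq_zero_or_pos (n k) with h0 | hpos
            · omega
            · have hsum3 : ∑ l ∈ ({i, j, k} : Finset (Fin d)), n l = n i + n j + n k := by
                have hm1 : i ∉ ({j, k} : Finset (Fin d)) := by
                  intro h
                  rcases Finset.mem_insert.1 h with h | h
                  · exact hij h.symm
                  · exact hki (Finset.mem_singleton.1 h).symm
                have hm2 : j ∉ ({k} : Finset (Fin d)) :=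
                  fun h => hkj (Finset.mem_singleton.1 h).symm
                rw [Finset.sum_insert hm1, Finset.sum_insert hm2, Finset.sum_singleton]
                omega
              have h3 : n i + n j + n k ≤ s := by
                rw [← hsum3, ← hsum]
                exact Finset.sum_le_sum_of_subset (Finset.subset_univ _)
              have hk1 : n k ≤ n i := hi k (Finset.mem_univ k)
              have hk2 : n k ≤ n j := hj k (Finset.mem_erase.2 ⟨hki, Finset.mem_univ k⟩)
              omega
      obtain ⟨M', hsym', hdiag', hrow'⟩ := ih (s - 2) (by omega) d n' hsum' heven' hle'
      refine ⟨fun k l => M' k l + ((if k = i ∧ l = j then 1 else 0) + (if k = j ∧ l = i then 1 else 0)), ?_, ?_, ?_⟩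
      · intro k l
        dsimp only
        rw [hsym' k l]
        have e1 : (k = i ∧ l = j) ↔ (l = j ∧ k = i) := and_comm
        have e2 : (k = j ∧ l = i) ↔ (l = i ∧ k = j) := and_comm
        simp only [e1, e2]
        omega
      · intro k
        dsimp only
        have h1 : ¬ (k = i ∧ k = j) := fun ⟨ha, hb⟩ => hij (hb ▸ ha ▸ rfl)
        have h2 : ¬ (k = j ∧ k = i) := fun ⟨ha, hb⟩ => hij (ha ▸ hb ▸ rfl)
        simp [hdiag', h1, h2]
      · intro k
        dsimp only
        rw [Finset.sum_add_distrib, Finset.sum_add_distrib, hrow']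
        have e1 : ∑ l : Fin d, (if k = i ∧ l = j then 1 else 0) = if k = i then 1 else 0 := by
          by_cases h : k = i <;> simp [h]
        have e2 : ∑ l : Fin d, (if k = j ∧ l = i then 1 else 0) = if k = j then 1 else 0 := by
          by_cases h : k = j <;> simp [h]
        rw [e1, e2]
        exact key k

lemma even_sum_of_sym (d : ℕ) (n : Fin d → ℕ)
    (M : Fin d → Fin d → ℕ) (hsym : ∀ i j, M i j = M j i) (hdiag : ∀ i, M i i = 0)
    (hrow : ∀ i, ∑ j, M i j = n i) : Even (∑ i, n i) := by
  have hS : ∑ i, n i = ∑ p ∈ Finset.univ ×ˢ Finset.univ, M p.1 p.2 := by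
    rw [Finset.sum_product]
    exact (Finset.sum_congr rfl (fun i _ => hrow i)).symm
  set t := (Finset.univ ×ˢ Finset.univ : Finset (Fin d × Fin d)) with ht
  have hsplit := Finset.sum_filter_add_sum_filter_not t (fun p => p.1 < p.2) (fun p => M p.1 p.2)
  have h2 : ∑ p ∈ t.filter (fun p => ¬ p.1 < p.2), M p.1 p.2
      = ∑ p ∈ t.filter (fun p => p.2 < p.1), M p.1 p.2 := by
    refine (Finset.sum_subset ?_ ?_).symm
    · intro p hp
      simp only [Finset.mem_filter] at hp ⊢
      exact ⟨hp.1, not_lt_of_gt hp.2⟩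
    · intro p hp hnp
      simp only [Finset.mem_filter] at hp hnp
      have : p.1 = p.2 := le_antisymm (not_lt.1 (fun h => hnp ⟨hp.1, h⟩)) (not_lt.1 hp.2)
      rw [this, hdiag]
  have h3 : ∑ p ∈ t.filter (fun p => p.2 < p.1), M p.1 p.2
      = ∑ p ∈ t.filter (fun p => p.1 < p.2), M p.1 p.2 := by
    refine Finset.sum_nbij' (fun p => p.swap) (fun p => p.swap) ?_ ?_ ?_ ?_ ?_
    · intro p hp
      simp only [Finset.mem_filter, ht, Finset.mem_product, Finset.mem_univ, true_and,
        Prod.fst_swap, Prod.snd_swap] at hp ⊢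
      exact hp
    · intro p hp
      simp only [Finset.mem_filter, ht, Finset.mem_product, Finset.mem_univ, true_and,
        Prod.fst_swap, Prod.snd_swap] at hp ⊢
      exact hp
    · intro p _; simp
    · intro p _; simp
    · intro p _
      simp only [Prod.fst_swap, Prod.snd_swap]
      exact hsym p.1 p.2
  rw [hS, ← hsplit, h2, h3]
  exact ⟨_, rfl⟩

/- Statement 12: a sequence `(n₁,…,n_d)` of positive integers is admissible
(realizable as the row sums of a symmetric ℕ-matrix with zero diagonal, i.e.
the degree sequence of a loopless multigraph) iff `Σ nᵢ` is even and
`2 nᵢ ≤ Σ n_j` for every `i`. -/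

/-- degree-sequence realizability criterion for loopless
multigraphs. -/
theorem admissible_iff (d : ℕ) (hd : 2 ≤ d) (n : Fin d → ℕ)
    (hn : ∀ i, 0 < n i) :
    (∃ M : Fin d → Fin d → ℕ,
        (∀ i j, M i j = M j i) ∧ (∀ i, M i i = 0) ∧ ∀ i, ∑ j, M i j = n i) ↔
      (Even (∑ i, n i) ∧ ∀ i, 2 * n i ≤ ∑ j, n j) := by
  constructor
  · rintro ⟨M, hsym, hdiag, hrow⟩
    refine ⟨even_sum_of_sym d n M hsym hdiag hrow, ?_⟩
    intro i
    have hMle : ∀ j, M i j ≤ n j := by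
      intro j
      rw [← hrow j, hsym i j]
      exact Finset.single_le_sum (fun k _ => Nat.zero_le _) (Finset.mem_univ i)
    have hrow' : ∑ j ∈ Finset.univ.erase i, M i j = n i := by
      rw [← hrow i]
      exact Finset.sum_erase _ (hdiag i)
    have h1 : n i ≤ ∑ j ∈ Finset.univ.erase i, n j := by
      rw [← hrow']
      exact Finset.sum_le_sum (fun j _ => hMle j)
    have h2 : ∑ j ∈ Finset.univ.erase i, n j + n i = ∑ j, n j :=
      Finset.sum_erase_add _ _ (Finset.mem_univ i)
    omega
  · rintro ⟨he, hl⟩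
    exact aux_admissible (∑ i, n i) d n rfl he hl
end

section
/- The Wick monomial :x₁^{n₁}:_K ⋆_{K′} ⋯ ⋆_{K′} :x_d^{n_d}:_K has nonzero expectation (as defined via the coefficient of ℏ^{(Σn_i)/2}, assuming K′ has entries that are algebraically independent/nonzero in a polynomial ring) if and only if the sequence (n₁,…,n_d) is admissible, i.e. Σ n_i is even and 2n_i ≤ Σ_j n_j for all i. -/
/- Statement 16: take the entries `K′_{ij}` (i<j) to be independent polynomial
indeterminates over ℚ (here `K′ i j = X (i,j)` in `MvPolynomial (Fin d × Fin d) ℚ`).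
The expectation of the Wick monomial `:x₁^{n₁}:_K ⋆_{K′} ⋯ ⋆_{K′} :x_d^{n_d}:_K`,
i.e. `c_m = (1/m!) Σ_M (m choose (m_{ij})) Π_{i<j} (K′_{ij})^{m_{ij}}` with
`2m = Σ n_i` (summed over adjacency matrices with row sums `n`, and defined to
be `0` when `Σ n_i` is odd), is nonzero iff `(n₁,…,n_d)` is admissible:
`Σ n_i` is even and `2 n_i ≤ Σ n_j` for all `i`. -/

open MvPolynomial

noncomputable section

/-- the finset of pairs `i < j`. -/
def pairs (d : ℕ) : Finset (Fin d × Fin d) :=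
  Finset.univ.filter (fun p : Fin d × Fin d => p.1 < p.2)

/-- the row sums `α_i = Σ_j m_{ij}`. -/
def rowSum {d : ℕ} (M : Fin d × Fin d → ℕ) (i : Fin d) : ℕ :=
  ∑ j : Fin d, (if i < j then M (i, j) else if j < i then M (j, i) else 0)

-- handshake
lemma handshake {d : ℕ} (M : Fin d × Fin d → ℕ) :
    ∑ i, rowSum M i = 2 * ∑ p ∈ pairs d, M p := by
  have h1 : ∑ p ∈ pairs d, M p
      = ∑ i : Fin d, ∑ j : Fin d, (if i < j then M (i, j) else 0) := by
    rw [pairs, Finset.sum_filter]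
    exact Fintype.sum_prod_type _
  unfold rowSum
  rw [h1]
  have h2 : ∀ i j : Fin d,
      (if i < j then M (i, j) else if j < i then M (j, i) else 0)
        = (if i < j then M (i, j) else 0) + (if j < i then M (j, i) else 0) := by
    intro i j
    rcases lt_trichotomy i j with h | h | h
    · simp [h, lt_asymm h]
    · subst h; simp [lt_irrefl]
    · simp [h, lt_asymm h]
  simp_rw [h2, Finset.sum_add_distrib]
  rw [Finset.sum_comm (f := fun i j => if j < i then M (j, i) else 0)]
  ring

lemma rowSum_le {d : ℕ} (M : Fin d × Fin d → ℕ) (i : Fin d) :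
    2 * rowSum M i ≤ ∑ k, rowSum M k := by
  set t : Fin d → ℕ := fun k => if i < k then M (i, k) else if k < i then M (k, i) else 0 with ht
  have hti : t i = 0 := by simp [ht]
  have hle : ∀ k, k ≠ i → t k ≤ rowSum M k := by
    intro k hk
    have : (if k < i then M (k, i) else if i < k then M (i, k) else 0) ≤ rowSum M k :=
      Finset.single_le_sum (f := fun j => if k < j then M (k, j) else if j < k then M (j, k) else 0)
        (fun j _ => Nat.zero_le _) (Finset.mem_univ i)
    refine le_trans (le_of_eq ?_) this
    rcases lt_trichotomy i k with h | h | h <;> simp [ht, h, not_lt_of_gt, lt_irrefl]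
  have h1 : rowSum M i = ∑ k, t k := rfl
  have h2 : ∑ k, t k = ∑ k ∈ Finset.univ.erase i, t k := by
    rw [← Finset.sum_erase_add _ _ (Finset.mem_univ i), hti, add_zero]
  have h3 : ∑ k ∈ Finset.univ.erase i, t k ≤ ∑ k ∈ Finset.univ.erase i, rowSum M k :=
    Finset.sum_le_sum (fun k hk => hle k (Finset.ne_of_mem_erase hk))
  have h4 : ∑ k ∈ Finset.univ.erase i, rowSum M k + rowSum M i = ∑ k, rowSum M k :=
    Finset.sum_erase_add _ _ (Finset.mem_univ i)
  omega

def edge {d : ℕ} (a b : Fin d) : Fin d × Fin d → ℕ := fun p => if p = (a, b) then 1 else 0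

lemma rowSum_add {d : ℕ} (M N : Fin d × Fin d → ℕ) (i : Fin d) :
    rowSum (fun p => M p + N p) i = rowSum M i + rowSum N i := by
  unfold rowSum
  rw [← Finset.sum_add_distrib]
  refine Finset.sum_congr rfl fun j _ => ?_
  split_ifs <;> simp

lemma rowSum_edge {d : ℕ} {a b : Fin d} (hab : a < b) (k : Fin d) :
    rowSum (edge a b) k = if k = a ∨ k = b then 1 else 0 := by
  unfold rowSum edge
  rcases eq_or_ne k a with rfl | hka
  · rw [if_pos (Or.inl rfl), Finset.sum_eq_single b]
    · simp [hab]
    · intro j _ hj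
      rcases lt_trichotomy k j with h | h | h <;>
        simp [h, not_lt_of_gt, lt_irrefl, Prod.ext_iff, hj, hab.ne']
      · omega
    · simp
  rcases eq_or_ne k b with rfl | hkb
  · rw [if_pos (Or.inr rfl), Finset.sum_eq_single a]
    · simp [hab, not_lt_of_gt hab]
    · intro j _ hj
      rcases lt_trichotomy k j with h | h | h <;>
        simp [h, not_lt_of_gt, lt_irrefl, Prod.ext_iff, hj, hab.ne]
      · omega
    · simp
  · rw [if_neg (by tauto), Finset.sum_eq_zero]
    intro j _
    rcases lt_trichotomy k j with h | h | h <;>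
      simp [h, not_lt_of_gt, lt_irrefl, Prod.ext_iff, hka, hkb]

lemma exists_adj {d : ℕ} : ∀ s : ℕ, ∀ n : Fin d → ℕ, ∑ i, n i = s → Even s →
    (∀ i, 2 * n i ≤ s) →
    ∃ M : Fin d × Fin d → ℕ, (∀ p, p ∉ pairs d → M p = 0) ∧ ∀ i, rowSum M i = n i := by
  intro s
  induction s using Nat.strong_induction_on with
  | _ s ih =>
    intro n hsum hev hdom
    rcases Nat.eq_zero_or_pos s with rfl | hs
    · refine ⟨fun _ => 0, fun _ _ => rfl, fun i => ?_⟩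
      have : n i = 0 := by have := hdom i; omega
      simp [rowSum, this]
    -- pick i with n i maximal
    have hd : (Finset.univ : Finset (Fin d)).Nonempty := by
      by_contra h
      rw [Finset.not_nonempty_iff_eq_empty] at h
      rw [h, Finset.sum_empty] at hsum; omega
    obtain ⟨i, -, hi⟩ := Finset.exists_max_image Finset.univ n hd
    have hni : 0 < n i := by
      by_contra h
      have : ∀ k ∈ Finset.univ, n k = 0 := fun k _ => by
        have := hi k (Finset.mem_univ k); omega
      rw [Finset.sum_congr rfl this] at hsum; simp at hsum; omega
    have hj : ∃ j, j ≠ i ∧ 0 < n j := by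
      by_contra h
      push_neg at h
      have : ∑ k, n k = n i := by
        rw [← Finset.sum_erase_add _ _ (Finset.mem_univ i), Finset.sum_eq_zero, zero_add]
        intro k hk
        have := h k (Finset.ne_of_mem_erase hk); omega
      have := hdom i; omega
    obtain ⟨j, hji, hnj⟩ := hj
    -- new sequence
    set n' : Fin d → ℕ := fun k => n k - (if k = i ∨ k = j then 1 else 0) with hn'
    have hind : ∀ k ∈ Finset.univ, (if k = i ∨ k = j then 1 else 0) ≤ n k := by
      intro k _
      split_ifs with h
      · rcases h with rfl | rfl <;> omega
      · omega
    have hsum' : ∑ k, n' k = s - 2 := by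
      have e : ∑ k, n' k = ∑ k, n k - ∑ k : Fin d, (if k = i ∨ k = j then 1 else 0) :=
        Finset.sum_tsub_distrib _ hind
      rw [e, hsum]
      have : ∑ k : Fin d, (if k = i ∨ k = j then 1 else 0)
          = ∑ k : Fin d, ((if k = i then 1 else 0) + (if k = j then 1 else 0)) := by
        refine Finset.sum_congr rfl fun k _ => ?_
        rcases eq_or_ne k i with rfl | h1 <;> rcases eq_or_ne k j with rfl | h2 <;>
          simp_all
      rw [this, Finset.sum_add_distrib, Finset.sum_ite_eq', Finset.sum_ite_eq']
      simp
    have hs2 : 2 ≤ s := by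
      have := Nat.even_iff.mp hev; omega
    have hev' : Even (s - 2) := by
      have := Nat.even_iff.mp hev
      rw [Nat.even_iff]; omega
    have hdom' : ∀ k, 2 * n' k ≤ s - 2 := by
      intro k
      rcases eq_or_ne k i with rfl | hki
      · have e : n' k = n k - 1 := by simp [hn']
        have := hdom k; omega
      rcases eq_or_ne k j with rfl | hkj
      · have e : n' k = n k - 1 := by simp [hn']
        have := hdom k; omega
      · have h1 : n k ≤ n i := hi k (Finset.mem_univ k)
        have h3 : n i + n j + n k ≤ s := by
          rw [← hsum]
          have hsub : ({i, j, k} : Finset (Fin d)) ⊆ Finset.univ := Finset.subset_univ _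
          calc n i + n j + n k = ∑ l ∈ ({i, j, k} : Finset (Fin d)), n l := by
                rw [Finset.sum_insert (by simp [hji.symm, hki.symm]),
                  Finset.sum_insert (by simp [hkj.symm]), Finset.sum_singleton]
                ring
            _ ≤ ∑ l, n l := Finset.sum_le_sum_of_subset hsub
        have hpar := Nat.even_iff.mp hev
        simp only [hn', if_neg (by tauto)]
        omega
    obtain ⟨M', hM'supp, hM'row⟩ := ih (s - 2) (by omega) n' hsum' hev' hdom'
    -- edge between i and j with correct orientation
    obtain ⟨a, b, hab, hor⟩ : ∃ a b : Fin d, a < b ∧ ∀ k, (k = a ∨ k = b) ↔ (k = i ∨ k = j) := by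
      rcases lt_or_gt_of_ne hji with h | h
      · exact ⟨j, i, h, fun k => or_comm⟩
      · exact ⟨i, j, h, fun k => Iff.rfl⟩
    refine ⟨fun p => M' p + edge a b p, ?_, ?_⟩
    · intro p hp
      have h1 := hM'supp p hp
      have h2 : edge a b p = 0 := by
        rw [edge, if_neg]
        rintro rfl
        exact hp (by simp [pairs, hab])
      show M' p + edge a b p = 0
      omega
    · intro k
      rw [rowSum_add, hM'row, rowSum_edge hab]
      have e : n' k = n k - (if k = i ∨ k = j then 1 else 0) := rfl
      have := hind k (Finset.mem_univ k)
      rw [show (if k = a ∨ k = b then 1 else 0) = (if k = i ∨ k = j then 1 else 0) by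
        simp only [hor]]
      omega

lemma prod_X_pow_eq {σ : Type*} [DecidableEq σ] (s : Finset σ) (M : σ → ℕ) :
    ∏ p ∈ s, (X p : MvPolynomial σ ℚ) ^ M p
      = monomial (∑ p ∈ s, Finsupp.single p (M p)) 1 := by
  induction s using Finset.cons_induction with
  | empty => simp
  | cons a s ha ih =>
      rw [Finset.prod_cons, ih, Finset.sum_cons, X_pow_eq_monomial, monomial_mul, one_mul]

lemma sum_single_apply {σ : Type*} [DecidableEq σ] (t : Finset σ) (f : σ → ℕ) (q : σ) :
    (∑ p ∈ t, Finsupp.single p (f p)) q = if q ∈ t then f q else 0 := by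
  rw [Finset.sum_apply']
  simp_rw [Finsupp.single_apply]
  exact Finset.sum_ite_eq' t q f

/-- the expectation of the Wick monomial, with `K′_{ij}` generic indeterminates:
`(1/m!) Σ_M (m choose (m_{ij})) Π_{i<j} X_{ij}^{m_{ij}}` for `2m = Σ n_i`,
and `0` when `Σ n_i` is odd. -/
def expectation {d : ℕ} (n : Fin d → ℕ) : MvPolynomial (Fin d × Fin d) ℚ :=
  if Even (∑ i, n i) then
    (((∑ i, n i) / 2).factorial : ℚ)⁻¹ •
      ∑ M ∈ (Finset.piAntidiag (pairs d) ((∑ i, n i) / 2)).filter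
          (fun M => ∀ i, rowSum M i = n i),
        Nat.multinomial (pairs d) M • ∏ p ∈ pairs d, (X p) ^ M p
  else 0

/-- the Wick monomial has nonzero expectation iff
`(n₁,…,n_d)` is admissible. -/
theorem expectation_ne_zero_iff_admissible {d : ℕ} (n : Fin d → ℕ)
    (hn : ∀ i, 0 < n i) :
    expectation n ≠ 0 ↔ (Even (∑ i, n i) ∧ ∀ i, 2 * n i ≤ ∑ j, n j) := by
  constructor
  · intro hne
    by_cases hev : Even (∑ i, n i)
    swap
    · exact absurd (by rw [expectation, if_neg hev]) hne
    refine ⟨hev, ?_⟩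
    have hS : ((Finset.piAntidiag (pairs d) ((∑ i, n i) / 2)).filter
        (fun M => ∀ i, rowSum M i = n i)).Nonempty := by
      by_contra h
      rw [Finset.not_nonempty_iff_eq_empty] at h
      exact hne (by rw [expectation, if_pos hev, h, Finset.sum_empty, smul_zero])
    obtain ⟨M, hM⟩ := hS
    rw [Finset.mem_filter] at hM
    intro i
    have h1 := rowSum_le M i
    have h3 : ∑ k, rowSum M k = ∑ k, n k := Finset.sum_congr rfl fun k _ => hM.2 k
    rw [hM.2 i, h3] at h1
    exact h1
  · rintro ⟨hev, hdom⟩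
    obtain ⟨M₀, hsupp, hrow⟩ := exists_adj (∑ i, n i) n rfl hev hdom
    have hMsum : ∑ p ∈ pairs d, M₀ p = (∑ i, n i) / 2 := by
      have h2 := handshake M₀
      have h3 : ∑ k, rowSum M₀ k = ∑ i, n i := Finset.sum_congr rfl fun k _ => hrow k
      have h4 : (∑ i, n i) % 2 = 0 := Nat.even_iff.mp hev
      omega
    have hM₀ : M₀ ∈ (Finset.piAntidiag (pairs d) ((∑ i, n i) / 2)).filter
        (fun M => ∀ i, rowSum M i = n i) := by
      rw [Finset.mem_filter, Finset.mem_piAntidiag]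
      refine ⟨⟨hMsum, fun p hp => ?_⟩, hrow⟩
      by_contra h
      exact hp (hsupp p h)
    rw [expectation, if_pos hev]
    intro h0
    set μ₀ := ∑ p ∈ pairs d, Finsupp.single p (M₀ p) with hμ₀
    have hc := congrArg (coeff μ₀) h0
    rw [coeff_smul, coeff_zero, coeff_sum] at hc
    have hside : ∀ M ∈ (Finset.piAntidiag (pairs d) ((∑ i, n i) / 2)).filter
        (fun M => ∀ i, rowSum M i = n i), M ≠ M₀ →
        coeff μ₀ (Nat.multinomial (pairs d) M • ∏ p ∈ pairs d, (X p : MvPolynomial (Fin d × Fin d) ℚ) ^ M p) = 0 := by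
      intro M hM hne
      rw [Finset.mem_filter, Finset.mem_piAntidiag] at hM
      rw [prod_X_pow_eq, coeff_smul, coeff_monomial, if_neg, smul_zero]
      intro heq
      apply hne
      funext q
      by_cases hq : q ∈ pairs d
      · have := congrArg (fun μ => μ q) heq
        simpa [sum_single_apply, hq, hμ₀] using this
      · have h1 : M q = 0 := by
          by_contra h
          exact hq (hM.1.2 q h)
        rw [h1]
        exact (hsupp q hq).symm
    rw [Finset.sum_eq_single_of_mem M₀ hM₀ hside, prod_X_pow_eq, ← hμ₀, coeff_smul,
      coeff_monomial, if_pos rfl] at hc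
    have h1 : (((∑ i, n i) / 2).factorial : ℚ) ≠ 0 :=
      Nat.cast_ne_zero.mpr (Nat.factorial_ne_zero _)
    have h2 : ((Nat.multinomial (pairs d) M₀ : ℚ)) ≠ 0 :=
      Nat.cast_ne_zero.mpr (Nat.multinomial_pos _ _).ne'
    rw [smul_eq_mul, nsmul_eq_mul, mul_one] at hc
    exact (mul_ne_zero (inv_ne_zero h1) h2) hc

end
end
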